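/- arXiv:1710.01503 — 5 statements merged into one kernel-verified Lean document; each statement's English description precedes it below -/
import Mathlib

section
/- Suppose that for every stage k < N the investment satisfies the modulation condition −((d_max − d(k))/((1 − d(k))·X_max))·V(k) ≤ I(k) ≤ ((d_max − d(k))/((1 − d(k))·|X_min|))·V(k), and that every realized return satisfies X_min ≤ X(k) ≤ X_max. Then the percentage drawdown satisfies d(k) ≤ d_max for every stage k = 0, 1, …, N. -/
/-!
The modulation bounds cap the loss of stage `k` at `(d_max - d(k)) / (1 - d(k)) · V(k)`, and since
`V(k) = (1 - d(k)) · V_max(k)` this is `(d_max - d(k)) · V_max(k)`. Hence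
`V(k+1) ≥ (1 - d_max) · V_max(k)`, which is `d(k+1) ≤ d_max` whether or not the maximum moves.
-/

/-- Running maximum `V_max(k) = max_{0 ≤ i ≤ k} V(i)` of the account value. -/
noncomputable def runMax (V : ℕ → ℝ) (k : ℕ) : ℝ :=
  (Finset.range (k + 1)).sup' Finset.nonempty_range_add_one V

/-- Percentage drawdown `d(k) = (V_max(k) - V(k)) / V_max(k)`. -/
noncomputable def drawdown (V : ℕ → ℝ) (k : ℕ) : ℝ :=
  (runMax V k - V k) / runMax V k

lemma runMax_zero (V : ℕ → ℝ) : runMax V 0 = V 0 := by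
  simp [runMax]

lemma runMax_succ (V : ℕ → ℝ) (k : ℕ) :
    runMax V (k + 1) = max (V (k + 1)) (runMax V k) := by
  simp only [runMax, Finset.range_add_one (n := k + 1)]
  exact Finset.sup'_insert ..

lemma le_runMax (V : ℕ → ℝ) {i k : ℕ} (h : i ≤ k) : V i ≤ runMax V k :=
  Finset.le_sup' V (Finset.mem_range.mpr (Nat.lt_succ_of_le h))

lemma runMax_pos {V : ℕ → ℝ} (hV0 : 0 < V 0) (k : ℕ) : 0 < runMax V k :=
  hV0.trans_le (le_runMax V k.zero_le)

lemma drawdown_zero (V : ℕ → ℝ) : drawdown V 0 = 0 := by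
  simp [drawdown, runMax_zero]

lemma one_sub_drawdown_mul_runMax {V : ℕ → ℝ} {k : ℕ} (hM : runMax V k ≠ 0) :
    (1 - drawdown V k) * runMax V k = V k := by
  rw [drawdown, sub_mul, div_mul_cancel₀ _ hM]
  ring

lemma drawdown_le_iff {V : ℕ → ℝ} {k : ℕ} {δ : ℝ} (hM : 0 < runMax V k) :
    drawdown V k ≤ δ ↔ (1 - δ) * runMax V k ≤ V k := by
  rw [drawdown, div_le_iff₀ hM]
  constructor <;> intro h <;> linarith

lemma drawdown_succ_le {V : ℕ → ℝ} {k : ℕ} {δ : ℝ} (hM : 0 < runMax V k) (hδ : 0 ≤ δ)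
    (h : (1 - δ) * runMax V k ≤ V (k + 1)) : drawdown V (k + 1) ≤ δ := by
  have hM' : 0 < runMax V (k + 1) := hM.trans_le (runMax_succ V k ▸ le_max_right _ _)
  rw [drawdown_le_iff hM', runMax_succ]
  rcases le_total (runMax V k) (V (k + 1)) with hle | hle
  · rw [max_eq_left hle]
    nlinarith
  · rwa [max_eq_right hle]

/-- The worst return is `a` for a long position and `b` for a short one. -/
lemma neg_mul_le_mul_of_investment_bounds {a b c v i x : ℝ} (ha : a < 0) (hb : 0 < b)
    (hx : a ≤ x ∧ x ≤ b) (hi : -(c / b) * v ≤ i ∧ i ≤ c / |a| * v) : -(c * v) ≤ i * x := by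
  rcases le_total 0 i with hi0 | hi0
  · have hbound : i * |a| ≤ c * v := by
      calc i * |a| ≤ c / |a| * v * |a| := mul_le_mul_of_nonneg_right hi.2 (abs_nonneg a)
        _ = c * v := by field_simp [abs_ne_zero.mpr ha.ne]
    calc -(c * v) ≤ i * a := by rw [abs_of_neg ha] at hbound; linarith
      _ ≤ i * x := mul_le_mul_of_nonneg_left hx.1 hi0
  · calc -(c * v) = -(c / b) * v * b := by field_simp
      _ ≤ i * b := mul_le_mul_of_nonneg_right hi.1 hb.le
      _ ≤ i * x := mul_le_mul_of_nonpos_left hx.2 hi0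

theorem drawdown_modulation_sufficiency_general
    (N : ℕ) (V I X : ℕ → ℝ) (Xmin Xmax dmax : ℝ)
    (hXmin0 : Xmin < 0) (hXmax : 0 < Xmax)
    (hdmax0 : 0 < dmax) (hdmax1 : dmax < 1)
    (hV0 : 0 < V 0)
    (hrec : ∀ k, V (k + 1) = V k + I k * X k)
    (hX : ∀ k, Xmin ≤ X k ∧ X k ≤ Xmax)
    (hI : ∀ k < N,
      -((dmax - drawdown V k) / ((1 - drawdown V k) * Xmax)) * V k ≤ I k ∧
      I k ≤ ((dmax - drawdown V k) / ((1 - drawdown V k) * |Xmin|)) * V k) :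
    ∀ k ≤ N, drawdown V k ≤ dmax := by
  intro k hk
  induction k with
  | zero => exact (drawdown_zero V).le.trans hdmax0.le
  | succ k ih =>
    have hbounds := hI k hk
    simp only [div_mul_eq_div_div] at hbounds
    set d := drawdown V k
    set M := runMax V k
    have hM : 0 < M := runMax_pos hV0 k
    have hd : d < 1 := (ih (by omega)).trans_lt hdmax1
    have hVk : (1 - d) * M = V k := one_sub_drawdown_mul_runMax hM.ne'
    have hloss : -((dmax - d) * M) ≤ I k * X k := by
      have hc : (dmax - d) / (1 - d) * V k = (dmax - d) * M := by
        rw [← hVk]; field_simp [sub_ne_zero.mpr hd.ne']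
      simpa only [hc] using neg_mul_le_mul_of_investment_bounds hXmin0 hXmax (hX k) hbounds
    refine drawdown_succ_le hM hdmax0.le ?_
    rw [hrec k, ← hVk]
    linarith

theorem drawdown_modulation_sufficiency
    (N : ℕ) (V I X : ℕ → ℝ) (Xmin Xmax dmax : ℝ)
    (hXmin1 : -1 < Xmin) (hXmin0 : Xmin < 0) (hXmax : 0 < Xmax)
    (hdmax0 : 0 < dmax) (hdmax1 : dmax < 1)
    (hV0 : 0 < V 0)
    (hrec : ∀ k, V (k + 1) = V k + I k * X k)
    (hX : ∀ k, Xmin ≤ X k ∧ X k ≤ Xmax)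
    (hI : ∀ k < N,
      -((dmax - drawdown V k) / ((1 - drawdown V k) * Xmax)) * V k ≤ I k ∧
      I k ≤ ((dmax - drawdown V k) / ((1 - drawdown V k) * |Xmin|)) * V k) :
    ∀ k ≤ N, drawdown V k ≤ dmax :=
  drawdown_modulation_sufficiency_general N V I X Xmin Xmax dmax hXmin0 hXmax hdmax0 hdmax1 hV0 hrec
    hX hI
end

section
/- Suppose that for every stage k < N the investment satisfies the modulation condition −((d_max − d(k))/((1 − d(k))·X_max))·V(k) ≤ I(k) ≤ ((d_max − d(k))/((1 − d(k))·|X_min|))·V(k), and that every realized return satisfies X_min ≤ X(k) ≤ X_max. Then survival is guaranteed: for every stage k = 0, 1, …, N one has V(k) ≥ (1 − d_max)·V_max(k) > 0; in particular V(k) > 0 for all k. -/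
lemma neg_le_mul_of_mem_Icc {a b c x y : ℝ} (hb : b < 0) (hc : 0 < c)
    (hx : x ∈ Set.Icc b c) (hy : y ∈ Set.Icc (-(a / c)) (a / |b|)) : -a ≤ y * x := by
  obtain ⟨hbx, hxc⟩ := hx
  obtain ⟨hya, hay⟩ := hy
  rw [abs_of_neg hb, le_div_iff₀ (neg_pos.mpr hb)] at hay
  rw [← neg_div, div_le_iff₀ hc] at hya
  rcases le_total 0 y with hy0 | hy0
  · calc -a ≤ y * b := by linarith
      _ ≤ y * x := mul_le_mul_of_nonneg_left hbx hy0
  · calc -a ≤ y * c := hya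
      _ ≤ y * x := mul_le_mul_of_nonpos_left hxc hy0

lemma drawdown_modulation_eq {V : ℕ → ℝ} {k : ℕ} (hM : runMax V k ≠ 0) (hV : V k ≠ 0)
    (δ c : ℝ) :
    (δ - drawdown V k) / ((1 - drawdown V k) * c) * V k = (V k - (1 - δ) * runMax V k) / c := by
  have h1 : 1 - drawdown V k = V k / runMax V k := by
    unfold drawdown; field_simp; ring
  have h2 : δ - drawdown V k = (V k - (1 - δ) * runMax V k) / runMax V k := by
    unfold drawdown; field_simp; ring
  rw [h1, h2, div_mul_eq_div_div, div_div_div_cancel_right₀ hM, div_right_comm,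
    div_mul_cancel₀ _ hV]

lemma runMax_le_runMax_succ (V : ℕ → ℝ) (k : ℕ) : runMax V k ≤ runMax V (k + 1) := by
  rw [runMax_succ]
  exact le_max_right _ _

lemma mul_runMax_le_succ_of_modulated {V I X : ℕ → ℝ} {k : ℕ} {Xmin Xmax δ : ℝ}
    (hXmin : Xmin < 0) (hXmax : 0 < Xmax) (hM : 0 < runMax V k) (hV : 0 < V k)
    (hrec : V (k + 1) = V k + I k * X k) (hX : X k ∈ Set.Icc Xmin Xmax)
    (hI : -((δ - drawdown V k) / ((1 - drawdown V k) * Xmax)) * V k ≤ I k ∧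
      I k ≤ ((δ - drawdown V k) / ((1 - drawdown V k) * |Xmin|)) * V k) :
    (1 - δ) * runMax V k ≤ V (k + 1) := by
  simp only [neg_mul, drawdown_modulation_eq hM.ne' hV.ne'] at hI
  have hloss := neg_le_mul_of_mem_Icc hXmin hXmax hX hI
  rw [hrec]
  linarith

lemma mul_runMax_succ_le_of_mul_runMax_le {V : ℕ → ℝ} {k : ℕ} {δ : ℝ} (hδ0 : 0 ≤ δ) (hδ1 : δ < 1)
    (hM : 0 < runMax V k) (hstep : (1 - δ) * runMax V k ≤ V (k + 1)) :
    (1 - δ) * runMax V (k + 1) ≤ V (k + 1) := by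
  have hV : 0 ≤ V (k + 1) := (mul_pos (sub_pos.mpr hδ1) hM).le.trans hstep
  rw [runMax_succ, mul_max_of_nonneg _ _ (sub_nonneg.mpr hδ1.le)]
  exact max_le (mul_le_of_le_one_left hV (by linarith)) hstep

theorem drawdown_modulation_survival_general
    (N : ℕ) (V I X : ℕ → ℝ) (Xmin Xmax dmax : ℝ)
    (hXmin0 : Xmin < 0) (hXmax : 0 < Xmax)
    (hdmax0 : 0 < dmax) (hdmax1 : dmax < 1)
    (hV0 : 0 < V 0)
    (hrec : ∀ k, V (k + 1) = V k + I k * X k)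
    (hX : ∀ k, Xmin ≤ X k ∧ X k ≤ Xmax)
    (hI : ∀ k < N,
      -((dmax - drawdown V k) / ((1 - drawdown V k) * Xmax)) * V k ≤ I k ∧
      I k ≤ ((dmax - drawdown V k) / ((1 - drawdown V k) * |Xmin|)) * V k) :
    ∀ k ≤ N, (1 - dmax) * runMax V k ≤ V k ∧ 0 < (1 - dmax) * runMax V k ∧ 0 < V k := by
  have hfloor_pos {k : ℕ} (hM : 0 < runMax V k) : 0 < (1 - dmax) * runMax V k :=
    mul_pos (sub_pos.mpr hdmax1) hM
  have invariant : ∀ k ≤ N, (1 - dmax) * runMax V k ≤ V k ∧ 0 < runMax V k := by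
    intro k
    induction k with
    | zero =>
      intro _
      rw [runMax_zero]
      exact ⟨mul_le_of_le_one_left hV0.le (by linarith), hV0⟩
    | succ k ih =>
      intro hk
      obtain ⟨hfloor, hM⟩ := ih (by omega)
      have hstep := mul_runMax_le_succ_of_modulated hXmin0 hXmax hM
        ((hfloor_pos hM).trans_le hfloor) (hrec k) (hX k) (hI k (by omega))
      exact ⟨mul_runMax_succ_le_of_mul_runMax_le hdmax0.le hdmax1 hM hstep,
        hM.trans_le (runMax_le_runMax_succ V k)⟩
  intro k hk
  obtain ⟨hfloor, hM⟩ := invariant k hk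
  exact ⟨hfloor, hfloor_pos hM, (hfloor_pos hM).trans_le hfloor⟩

theorem drawdown_modulation_survival
    (N : ℕ) (V I X : ℕ → ℝ) (Xmin Xmax dmax : ℝ)
    (hXmin1 : -1 < Xmin) (hXmin0 : Xmin < 0) (hXmax : 0 < Xmax)
    (hdmax0 : 0 < dmax) (hdmax1 : dmax < 1)
    (hV0 : 0 < V 0)
    (hrec : ∀ k, V (k + 1) = V k + I k * X k)
    (hX : ∀ k, Xmin ≤ X k ∧ X k ≤ Xmax)
    (hI : ∀ k < N,
      -((dmax - drawdown V k) / ((1 - drawdown V k) * Xmax)) * V k ≤ I k ∧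
      I k ≤ ((dmax - drawdown V k) / ((1 - drawdown V k) * |Xmin|)) * V k) :
    ∀ k ≤ N, (1 - dmax) * runMax V k ≤ V k ∧ 0 < (1 - dmax) * runMax V k ∧ 0 < V k :=
  drawdown_modulation_survival_general N V I X Xmin Xmax dmax hXmin0 hXmax hdmax0 hdmax1 hV0 hrec hX
    hI
end

section
/- Let V > 0 and V_max ≥ V be reals, set d = (V_max − V)/V_max, and assume d ≤ d_max. If the investment I ∈ ℝ is such that for every return x ∈ [X_min, X_max] the updated drawdown d' = (V_max' − V')/V_max' (with V' = V + I·x and V_max' = max(V_max, V')) satisfies d' ≤ d_max, then I necessarily satisfies both inequalities −((d_max − d)/((1 − d)·X_max))·V ≤ I and I ≤ ((d_max − d)/((1 − d)·|X_min|))·V. -/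
theorem one_step_drawdown_necessity
    (Xmin Xmax dmax V Vm I : ℝ)
    (hXmin1 : -1 < Xmin) (hXmin0 : Xmin < 0) (hXmax : 0 < Xmax)
    (hdmax0 : 0 < dmax) (hdmax1 : dmax < 1)
    (hV : 0 < V) (hVm : V ≤ Vm)
    (d : ℝ) (hd_def : d = (Vm - V) / Vm)
    (hd : d ≤ dmax)
    (hsafe : ∀ x : ℝ, Xmin ≤ x → x ≤ Xmax →
      (max Vm (V + I * x) - (V + I * x)) / max Vm (V + I * x) ≤ dmax) :
    -((dmax - d) / ((1 - d) * Xmax)) * V ≤ I ∧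
    I ≤ ((dmax - d) / ((1 - d) * |Xmin|)) * V := by
  have hVm0 : 0 < Vm := lt_of_lt_of_le hV hVm
  have hVne : Vm ≠ 0 := ne_of_gt hVm0
  have hdV : d * Vm = Vm - V := by rw [hd_def, div_mul_cancel₀ _ hVne]
  have h1d0 : 0 < 1 - d := by
    have : (1 - d) * Vm = V := by linarith
    nlinarith
  have h1dne : (1 : ℝ) - d ≠ 0 := ne_of_gt h1d0
  have eV : V = (1 - d) * Vm := by linarith
  set A : ℝ := dmax * Vm - (Vm - V) with hA
  have hAe : A = (dmax - d) * Vm := by rw [hA]; linarith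
  have hA0 : 0 ≤ A := by
    rw [hd_def, div_le_iff₀ hVm0] at hd
    linarith
  constructor
  · -- lower bound, use x = Xmax
    have e1 : -((dmax - d) / ((1 - d) * Xmax)) * V = -(A / Xmax) := by
      rw [eV, hAe]
      field_simp
    rw [e1]
    have key : -A ≤ I * Xmax := by
      rcases le_or_gt Vm (V + I * Xmax) with h | h
      · nlinarith
      · have hs := hsafe Xmax (le_of_lt (lt_trans hXmin0 hXmax)) le_rfl
        rw [max_eq_left h.le] at hs
        rw [div_le_iff₀ hVm0] at hs
        linarith
    have hc := div_mul_cancel₀ A (ne_of_gt hXmax)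
    nlinarith
  · -- upper bound, use x = Xmin
    rw [abs_of_neg hXmin0]
    have hXm : 0 < -Xmin := by linarith
    have e2 : ((dmax - d) / ((1 - d) * -Xmin)) * V = A / (-Xmin) := by
      rw [eV, hAe, div_mul_eq_mul_div,
        show (dmax - d) * ((1 - d) * Vm) = (1 - d) * ((dmax - d) * Vm) by ring,
        mul_div_mul_left _ _ h1dne]
    rw [e2]
    have key : I * (-Xmin) ≤ A := by
      rcases le_or_gt Vm (V + I * Xmin) with h | h
      · nlinarith
      · have hs := hsafe Xmin le_rfl (le_of_lt (lt_trans hXmin0 hXmax))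
        rw [max_eq_left h.le] at hs
        rw [div_le_iff₀ hVm0] at hs
        nlinarith
    have hc := div_mul_cancel₀ A (ne_of_gt hXm)
    nlinarith
end

section
/- Let d ∈ [0, d_max], set M = (d_max − d)/(1 − d), and let the feedback gain satisfy −1/X_max ≤ γ ≤ 1/|X_min|. Then for every return x ∈ [X_min, X_max], the one-step growth factor satisfies 1 + γ·M·x ≥ 1 − d_max > 0. -/
theorem modulated_growth_factor_bound
    (Xmin Xmax dmax d γ : ℝ)
    (hXmin1 : -1 < Xmin) (hXmin0 : Xmin < 0) (hXmax : 0 < Xmax)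
    (hdmax0 : 0 < dmax) (hdmax1 : dmax < 1)
    (hd0 : 0 ≤ d) (hd : d ≤ dmax)
    (hγlo : -(1 / Xmax) ≤ γ) (hγhi : γ ≤ 1 / |Xmin|) :
    ∀ x : ℝ, Xmin ≤ x → x ≤ Xmax →
      1 - dmax ≤ 1 + γ * ((dmax - d) / (1 - d)) * x ∧ 0 < 1 - dmax := by
  intro x hx1 hx2
  have habs : |Xmin| = -Xmin := abs_of_neg hXmin0
  rw [habs] at hγhi
  have h1d : 0 < 1 - d := by linarith
  set M : ℝ := (dmax - d) / (1 - d) with hM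
  have hM0 : 0 ≤ M := div_nonneg (by linarith) (le_of_lt h1d)
  have hMd : M ≤ dmax := by
    rw [hM, div_le_iff₀ h1d]
    nlinarith
  -- γ * x ≥ -1
  have hgx : -1 ≤ γ * x := by
    rcases le_or_gt 0 γ with hg | hg
    · have h1 : γ * Xmin ≤ γ * x := by nlinarith
      have h2 : -1 ≤ γ * Xmin := by
        have h := mul_le_mul_of_nonpos_right hγhi (le_of_lt hXmin0)
        rw [div_mul_eq_mul_div] at h
        have he : (1:ℝ) * Xmin / -Xmin = -1 := by
          rw [one_mul, div_neg, div_self (ne_of_lt hXmin0)]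
        linarith
      linarith
    · have h1 : γ * Xmax ≤ γ * x := by nlinarith
      have h2 : -1 ≤ γ * Xmax := by
        have h3 := mul_le_mul_of_nonneg_right hγlo (le_of_lt hXmax)
        have : -(1 / Xmax) * Xmax = -1 := by field_simp
        linarith
      linarith
  constructor
  · have : γ * M * x = M * (γ * x) := by ring
    rw [this]
    nlinarith
  · linarith
end

section
/- (Generalized Drawdown Modulation Lemma, one-step necessity.) Let V > 0 and V_max ≥ V be reals, set d = (V_max − V)/V_max, and assume d ≤ d_max. If the investment vector I ∈ ℝⁿ is such that for every return vector x in the box {x ∈ ℝⁿ : X_min,i ≤ x_i ≤ X_max,i for all i} the updated drawdown d' = (V_max' − V')/V_max' (with V' = V + ⟨I, x⟩ and V_max' = max(V_max, V')) satisfies d' ≤ d_max, then I necessarily satisfies ⟨|X_min|, I⁺⟩ − ⟨X_max, I⁻⟩ ≤ M·V, where M = (d_max − d)/(1 − d). -/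
/-!
The adversary's best reply to `I` is the corner `x` of the box with `x i = Xmin i` on long
positions and `x i = Xmax i` on short ones; it yields `⟨I, x⟩ = -(⟨|Xmin|, I⁺⟩ - ⟨Xmax, I⁻⟩)`.
A drawdown of at most `dmax` after the trade means `V' ≥ (1 - dmax) Vm`, and `M V` is exactly
the cushion `V - (1 - dmax) Vm` above that floor.
-/

open Finset

section WorstReturn

variable {ι : Type*} (Xmin Xmax I : ι → ℝ)

noncomputable def worstReturn (i : ι) : ℝ := if 0 ≤ I i then Xmin i else Xmax i

variable {Xmin Xmax}

theorem worstReturn_mem_box (hlo : ∀ i, Xmin i ≤ 0) (hhi : ∀ i, 0 ≤ Xmax i) (i : ι) :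
    Xmin i ≤ worstReturn Xmin Xmax I i ∧ worstReturn Xmin Xmax I i ≤ Xmax i := by
  unfold worstReturn
  split_ifs
  · exact ⟨le_rfl, (hlo i).trans (hhi i)⟩
  · exact ⟨(hlo i).trans (hhi i), le_rfl⟩

theorem sum_mul_worstReturn [Fintype ι] (hlo : ∀ i, Xmin i ≤ 0) :
    ∑ i, I i * worstReturn Xmin Xmax I i =
      -((∑ i, |Xmin i| * max (I i) 0) - ∑ i, Xmax i * min (I i) 0) := by
  rw [neg_sub, ← sum_sub_distrib]
  refine sum_congr rfl fun i _ => ?_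
  rw [abs_of_nonpos (hlo i), worstReturn]
  split_ifs with hI
  · rw [max_eq_left hI, min_eq_right hI]; ring
  · rw [max_eq_right (not_le.mp hI).le, min_eq_left (not_le.mp hI).le]; ring

end WorstReturn

theorem floor_le_of_drawdown_le {Vm V' dmax : ℝ} (hVm : 0 < Vm) (hdmax : 0 ≤ dmax)
    (h : (max Vm V' - V') / max Vm V' ≤ dmax) : (1 - dmax) * Vm ≤ V' := by
  rcases le_total Vm V' with hle | hle
  · linarith [mul_nonneg hdmax hVm.le]
  · rw [max_eq_left hle, div_le_iff₀ hVm] at h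
    linarith

theorem modulator_mul_eq {dmax V Vm : ℝ} (hV : V ≠ 0) (hVm : Vm ≠ 0) :
    (dmax - (Vm - V) / Vm) / (1 - (Vm - V) / Vm) * V = V - (1 - dmax) * Vm := by
  have hfrac : 1 - (Vm - V) / Vm = V / Vm := by field_simp; ring
  rw [hfrac]
  field_simp
  ring

theorem generalized_one_step_necessity_general
    (n : ℕ) (Xmin Xmax : Fin n → ℝ) (dmax V Vm : ℝ) (I : Fin n → ℝ)
    (hb : ∀ i, -1 < Xmin i ∧ Xmin i < 0 ∧ 0 < Xmax i)
    (hdmax0 : 0 < dmax)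
    (hV : 0 < V) (hVm : V ≤ Vm)
    (d : ℝ) (hd_def : d = (Vm - V) / Vm)
    (hsafe : ∀ x : Fin n → ℝ, (∀ i, Xmin i ≤ x i ∧ x i ≤ Xmax i) →
      (max Vm (V + ∑ i, I i * x i) - (V + ∑ i, I i * x i)) /
        max Vm (V + ∑ i, I i * x i) ≤ dmax) :
    (∑ i, |Xmin i| * max (I i) 0) - (∑ i, Xmax i * min (I i) 0)
      ≤ ((dmax - d) / (1 - d)) * V := by
  have hVm0 : 0 < Vm := hV.trans_le hVm
  have hlo : ∀ i, Xmin i ≤ 0 := fun i => (hb i).2.1.le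
  have hworst := hsafe _ (worstReturn_mem_box I hlo fun i => (hb i).2.2.le)
  rw [sum_mul_worstReturn I hlo] at hworst
  have hfloor := floor_le_of_drawdown_le hVm0 hdmax0.le hworst
  rw [hd_def, modulator_mul_eq hV.ne' hVm0.ne']
  linarith

theorem generalized_one_step_necessity
    (n : ℕ) (Xmin Xmax : Fin n → ℝ) (dmax V Vm : ℝ) (I : Fin n → ℝ)
    (hb : ∀ i, -1 < Xmin i ∧ Xmin i < 0 ∧ 0 < Xmax i)
    (hdmax0 : 0 < dmax) (hdmax1 : dmax < 1)
    (hV : 0 < V) (hVm : V ≤ Vm)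
    (d : ℝ) (hd_def : d = (Vm - V) / Vm)
    (hd : d ≤ dmax)
    (hsafe : ∀ x : Fin n → ℝ, (∀ i, Xmin i ≤ x i ∧ x i ≤ Xmax i) →
      (max Vm (V + ∑ i, I i * x i) - (V + ∑ i, I i * x i)) /
        max Vm (V + ∑ i, I i * x i) ≤ dmax) :
    (∑ i, |Xmin i| * max (I i) 0) - (∑ i, Xmax i * min (I i) 0)
      ≤ ((dmax - d) / (1 - d)) * V :=
  generalized_one_step_necessity_general n Xmin Xmax dmax V Vm I hb hdmax0 hV hVm d hd_def hsafe
end
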